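/- arXiv:2202.01103 — 2 statements merged into one kernel-verified Lean document; each statement's English description precedes it below -/
import Mathlib

section
/- For any temporal graph G with lifetime contained in [1,T], there exists a (Δ₁,Δ₂)-cluster temporal graph G' minimising the edit distance |G △ G'| (symmetric difference of time-edge sets) such that all time-edges of G' have times in [1,T]. -/
/-!
Edit distances are natural numbers, so some finite cluster graph `E₀` is optimal. Discard the
cliques of `E₀` with no time-edge in `[1, T]` and clamp the times of the others into `[1, T]`.
Clamping is monotone, so it preserves Δ₁-density, and since every kept clique meets `[1, T]` it
also preserves the Δ₂-gaps between lifetimes. It fixes every time-edge of `G`, and the discarded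
cliques share no time-edge with `G`, so the edit distance does not grow.
-/

/-- A time-edge: an (undirected) edge together with a time label. -/
abbrev TimeEdge := Sym2 ℕ × ℕ

/-- Vertices appearing in a set of time-edges. -/
def verts (S : Set TimeEdge) : Set ℕ := {v | ∃ te ∈ S, v ∈ te.1}

/-- Times appearing in a set of time-edges. -/
def times (S : Set TimeEdge) : Set ℕ := Prod.snd '' S

/-- The lifetime interval of a set of time-edges. -/
def lifetime (S : Set TimeEdge) : Set ℕ := Set.Icc (sInf (times S)) (sSup (times S))

/-- Two sets of time-edges are Δ₂-independent if their vertex sets are disjoint or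
their lifetime intervals are at temporal distance at least Δ₂. -/
def Indep (Δ₂ : ℕ) (S₁ S₂ : Set TimeEdge) : Prop :=
  Disjoint (verts S₁) (verts S₂) ∨
    ∀ s ∈ lifetime S₁, ∀ t ∈ lifetime S₂, Δ₂ ≤ max s t - min s t

/-- A set of time-edges is Δ₂-indivisible if it cannot be partitioned into two or more
nonempty pairwise Δ₂-independent subsets. -/
def Indivisible (Δ₂ : ℕ) (S : Set TimeEdge) : Prop :=
  ¬ ∃ P : Set (Set TimeEdge), P.Nontrivial ∧ (∀ A ∈ P, A.Nonempty) ∧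
      ⋃₀ P = S ∧ P.PairwiseDisjoint id ∧ P.Pairwise (Indep Δ₂)

/-- The edge `e` is Δ₁-dense in `[a,b]` with respect to the time-edge set `S`. -/
def DenseIn (S : Set TimeEdge) (Δ₁ : ℕ) (e : Sym2 ℕ) (a b : ℕ) : Prop :=
  ∀ τ ∈ Set.Icc a (max a (b + 1 - Δ₁)), ∃ t, t ∈ Set.Icc τ (τ + Δ₁ - 1) ∧ (e, t) ∈ S

/-- A set of time-edges forms a Δ₁-temporal clique if every pair of its vertices is
joined by an edge Δ₁-dense in its lifetime. -/
def IsTemporalClique (Δ₁ : ℕ) (K : Set TimeEdge) : Prop :=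
  ∀ x ∈ verts K, ∀ y ∈ verts K, x ≠ y →
    DenseIn K Δ₁ s(x, y) (sInf (times K)) (sSup (times K))

/-- A (Δ₁,Δ₂)-cluster temporal graph: the time-edges partition into pairwise
Δ₂-independent Δ₁-temporal cliques. -/
def IsClusterTemporalGraph (Δ₁ Δ₂ : ℕ) (E : Set TimeEdge) : Prop :=
  ∃ P : Set (Set TimeEdge), ⋃₀ P = E ∧ P.PairwiseDisjoint id ∧
    (∀ K ∈ P, IsTemporalClique Δ₁ K) ∧ P.Pairwise (Indep Δ₂)

/-- A Δ₂-saturated set of time-edges in `E`: a Δ₂-indivisible subset of `E` such that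
adding any other time-edge of `E` destroys indivisibility. -/
def Saturated (Δ₂ : ℕ) (E S : Set TimeEdge) : Prop :=
  S ⊆ E ∧ Indivisible Δ₂ S ∧ ∀ te ∈ E, te ∉ S → ¬ Indivisible Δ₂ (insert te S)

/-- The induced temporal subgraph on a vertex set `A`. -/
def induced (E : Set TimeEdge) (A : Set ℕ) : Set TimeEdge :=
  {te ∈ E | ∀ v ∈ te.1, v ∈ A}

/-- Two single time-edges are Δ-independent. -/
def TEIndep (Δ : ℕ) (te₁ te₂ : TimeEdge) : Prop :=
  (∀ v ∈ te₁.1, v ∉ te₂.1) ∨ Δ ≤ max te₁.2 te₂.2 - min te₁.2 te₂.2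

def clampTime (L U t : ℕ) : ℕ := min (max t L) U

def clampEdge (L U : ℕ) (te : TimeEdge) : TimeEdge := (te.1, clampTime L U te.2)

lemma clampTime_monotone (L U : ℕ) : Monotone (clampTime L U) := fun _ _ h => by
  unfold clampTime; omega

lemma clampTime_of_mem_Icc {L U t : ℕ} (ht : t ∈ Set.Icc L U) : clampTime L U t = t := by
  unfold clampTime; simp only [Set.mem_Icc] at ht; omega

lemma clampEdge_of_mem_Icc {L U : ℕ} {te : TimeEdge} (ht : te.2 ∈ Set.Icc L U) :
    clampEdge L U te = te := by
  simp [clampEdge, clampTime_of_mem_Icc ht]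

lemma verts_image_clampEdge (L U : ℕ) (K : Set TimeEdge) :
    verts (clampEdge L U '' K) = verts K := by
  ext v
  simp [verts, clampEdge]

lemma times_image_clampEdge (L U : ℕ) (K : Set TimeEdge) :
    times (clampEdge L U '' K) = clampTime L U '' times K := by
  simp only [times, Set.image_image]
  rfl

lemma times_image_clampEdge_subset {L U : ℕ} (h : L ≤ U) (K : Set TimeEdge) :
    times (clampEdge L U '' K) ⊆ Set.Icc L U := by
  rw [times_image_clampEdge]
  rintro _ ⟨t, -, rfl⟩
  simp only [clampTime, Set.mem_Icc]; omega

lemma mem_times {S : Set TimeEdge} {te : TimeEdge} (h : te ∈ S) : te.2 ∈ times S :=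
  ⟨te, h, rfl⟩

lemma mem_lifetime {S : Set TimeEdge} (hS : S.Finite) {te : TimeEdge} (h : te ∈ S) :
    te.2 ∈ lifetime S :=
  ⟨Nat.sInf_le (mem_times h), le_csSup (hS.image _).bddAbove (mem_times h)⟩

lemma sInf_times_image_clampEdge (L U : ℕ) {K : Set TimeEdge} (hK : K.Finite)
    (hne : K.Nonempty) :
    sInf (times (clampEdge L U '' K)) = clampTime L U (sInf (times K)) := by
  rw [times_image_clampEdge]
  exact ((hK.image Prod.snd).map_sInf_of_monotone (clampTime_monotone L U) (hne.image _)).symm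

lemma sSup_times_image_clampEdge (L U : ℕ) {K : Set TimeEdge} (hK : K.Finite)
    (hne : K.Nonempty) :
    sSup (times (clampEdge L U '' K)) = clampTime L U (sSup (times K)) := by
  rw [times_image_clampEdge]
  exact ((hK.image Prod.snd).map_sSup_of_monotone (clampTime_monotone L U) (hne.image _)).symm

lemma DenseIn.image_clampEdge {K : Set TimeEdge} {Δ₁ : ℕ} {e : Sym2 ℕ} {a b : ℕ} (L U : ℕ)
    (hΔ₁ : 1 ≤ Δ₁) (hK : DenseIn K Δ₁ e a b) (hab : ∀ t, (e, t) ∈ K → t ∈ Set.Icc a b) :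
    DenseIn (clampEdge L U '' K) Δ₁ e (clampTime L U a) (clampTime L U b) := by
  intro τ hτ
  simp only [Set.mem_Icc, clampTime] at hτ
  -- Either the window at `τ` lies in `[a, b]`, or `τ` is the only window start and the window
  -- at `a` clamps into it.
  by_cases hfit : a ≤ τ ∧ τ + Δ₁ ≤ b + 1
  · obtain ⟨t, ht, hmem⟩ := hK τ (by simp only [Set.mem_Icc]; omega)
    refine ⟨clampTime L U t, ?_, ⟨(e, t), hmem, rfl⟩⟩
    simp only [Set.mem_Icc, clampTime] at ht ⊢
    omega
  · obtain ⟨t, -, hmem⟩ := hK a (by simp only [Set.mem_Icc]; omega)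
    have ht := hab t hmem
    refine ⟨clampTime L U t, ?_, ⟨(e, t), hmem, rfl⟩⟩
    simp only [Set.mem_Icc, clampTime] at ht ⊢
    omega

lemma IsTemporalClique.image_clampEdge {Δ₁ : ℕ} {K : Set TimeEdge} (L U : ℕ) (hΔ₁ : 1 ≤ Δ₁)
    (hK : K.Finite) (hc : IsTemporalClique Δ₁ K) :
    IsTemporalClique Δ₁ (clampEdge L U '' K) := by
  rcases K.eq_empty_or_nonempty with rfl | hne
  · simp [IsTemporalClique, verts]
  intro x hx y hy hxy
  rw [verts_image_clampEdge] at hx hy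
  rw [sInf_times_image_clampEdge L U hK hne, sSup_times_image_clampEdge L U hK hne]
  exact (hc x hx y hy hxy).image_clampEdge L U hΔ₁ fun t ht => mem_lifetime hK ht

lemma forall_Icc_le_dist_iff {a₁ b₁ a₂ b₂ d : ℕ} (hd : 1 ≤ d) (h₁ : a₁ ≤ b₁) (h₂ : a₂ ≤ b₂) :
    (∀ s ∈ Set.Icc a₁ b₁, ∀ t ∈ Set.Icc a₂ b₂, d ≤ max s t - min s t) ↔
      b₁ + d ≤ a₂ ∨ b₂ + d ≤ a₁ := by
  constructor
  · intro h
    have h₁₂ := h b₁ ⟨h₁, le_rfl⟩ a₂ ⟨le_rfl, h₂⟩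
    have h₂₁ := h a₁ ⟨le_rfl, h₁⟩ b₂ ⟨h₂, le_rfl⟩
    by_contra! hc
    have hmax := h (max a₁ a₂) ⟨le_max_left _ _, by omega⟩ (max a₁ a₂) ⟨le_max_right _ _, by omega⟩
    omega
  · rintro h s ⟨hs₁, hs₂⟩ t ⟨ht₁, ht₂⟩
    omega

lemma Indep.image_clampEdge {Δ₂ L U : ℕ} {K₁ K₂ : Set TimeEdge} (hΔ₂ : 1 ≤ Δ₂)
    (hK₁ : K₁.Finite) (hK₂ : K₂.Finite)
    (hw₁ : ∃ te ∈ K₁, te.2 ∈ Set.Icc L U) (hw₂ : ∃ te ∈ K₂, te.2 ∈ Set.Icc L U)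
    (h : Indep Δ₂ K₁ K₂) : Indep Δ₂ (clampEdge L U '' K₁) (clampEdge L U '' K₂) := by
  rcases h with h | h
  · left
    rwa [verts_image_clampEdge, verts_image_clampEdge]
  right
  obtain ⟨te₁, hte₁, hL₁, hU₁⟩ := hw₁
  obtain ⟨te₂, hte₂, hL₂, hU₂⟩ := hw₂
  obtain ⟨ha₁, hb₁⟩ := mem_lifetime hK₁ hte₁
  obtain ⟨ha₂, hb₂⟩ := mem_lifetime hK₂ hte₂
  simp only [lifetime] at h ⊢
  rw [sInf_times_image_clampEdge L U hK₁ ⟨_, hte₁⟩, sSup_times_image_clampEdge L U hK₁ ⟨_, hte₁⟩,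
    sInf_times_image_clampEdge L U hK₂ ⟨_, hte₂⟩, sSup_times_image_clampEdge L U hK₂ ⟨_, hte₂⟩]
  rw [forall_Icc_le_dist_iff hΔ₂ (by omega) (by omega)] at h
  rw [forall_Icc_le_dist_iff hΔ₂ (clampTime_monotone L U (by omega))
    (clampTime_monotone L U (by omega))]
  simp only [clampTime]
  omega

lemma Indep.disjoint {Δ₂ : ℕ} {K₁ K₂ : Set TimeEdge} (hΔ₂ : 1 ≤ Δ₂) (hK₁ : K₁.Finite)
    (hK₂ : K₂.Finite) (h : Indep Δ₂ K₁ K₂) : Disjoint K₁ K₂ := by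
  rw [Set.disjoint_left]
  intro te hte₁ hte₂
  rcases h with h | h
  · exact Set.disjoint_left.mp h ⟨te, hte₁, te.1.out_fst_mem⟩ ⟨te, hte₂, te.1.out_fst_mem⟩
  · have := h _ (mem_lifetime hK₁ hte₁) _ (mem_lifetime hK₂ hte₂)
    omega

lemma Set.ncard_symmDiff_image_le {α : Type*} {E E₀ F : Set α} (f : α → α) (hE : E.Finite)
    (hE₀ : E₀.Finite) (hFE₀ : F ⊆ E₀) (hcover : E ∩ E₀ ⊆ F) (hfix : ∀ x ∈ E, f x = x) :
    (symmDiff E (f '' F)).ncard ≤ (symmDiff E E₀).ncard := by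
  have hF : F.Finite := hE₀.subset hFE₀
  have hleft : E \ f '' F ⊆ E \ E₀ := fun x ⟨hxE, hx⟩ =>
    ⟨hxE, fun hxE₀ => hx ⟨x, hcover ⟨hxE, hxE₀⟩, hfix x hxE⟩⟩
  have hright : f '' F \ E ⊆ f '' (E₀ \ E) := by
    rintro _ ⟨⟨x, hxF, rfl⟩, hx⟩
    exact ⟨x, ⟨hFE₀ hxF, fun hxE => hx (by rwa [hfix x hxE])⟩, rfl⟩
  have hright_card : (f '' F \ E).ncard ≤ (E₀ \ E).ncard :=
    (Set.ncard_le_ncard hright (hE₀.sdiff.image f)).trans (Set.ncard_image_le hE₀.sdiff)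
  rw [Set.symmDiff_def, Set.symmDiff_def,
    Set.ncard_union_eq disjoint_sdiff_sdiff hE.sdiff (hF.image f).sdiff,
    Set.ncard_union_eq disjoint_sdiff_sdiff hE.sdiff hE₀.sdiff]
  exact add_le_add (Set.ncard_le_ncard hleft hE.sdiff) hright_card

lemma isClusterTemporalGraph_empty (Δ₁ Δ₂ : ℕ) : IsClusterTemporalGraph Δ₁ Δ₂ ∅ :=
  ⟨∅, by simp, by simp, by simp, by simp⟩

lemma exists_isClusterTemporalGraph_ncard_symmDiff_le (Δ₁ Δ₂ : ℕ) (E : Set TimeEdge) :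
    ∃ E₀ : Set TimeEdge, E₀.Finite ∧ IsClusterTemporalGraph Δ₁ Δ₂ E₀ ∧
      ∀ E'' : Set TimeEdge, E''.Finite → IsClusterTemporalGraph Δ₁ Δ₂ E'' →
        (symmDiff E E₀).ncard ≤ (symmDiff E E'').ncard := by
  let S : Set (Set TimeEdge) := {F | F.Finite ∧ IsClusterTemporalGraph Δ₁ Δ₂ F}
  have hS : S.Nonempty := ⟨∅, Set.finite_empty, isClusterTemporalGraph_empty Δ₁ Δ₂⟩
  let cost : Set TimeEdge → ℕ := fun F => (symmDiff E F).ncard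
  obtain ⟨hfin, hc⟩ := Function.argminOn_mem cost S hS
  exact ⟨_, hfin, hc, fun E'' hf hc'' => Function.argminOn_le cost S ⟨hf, hc''⟩⟩

/-- Keep the cliques meeting the window `[L, U]` and clamp their times into it. -/
lemma IsClusterTemporalGraph.exists_clampEdge {Δ₁ Δ₂ : ℕ} (L U : ℕ) (hΔ₁ : 1 ≤ Δ₁)
    (hΔ₂ : 1 ≤ Δ₂) {E₀ : Set TimeEdge} (hE₀ : E₀.Finite) (hc : IsClusterTemporalGraph Δ₁ Δ₂ E₀) :
    ∃ F ⊆ E₀, {te ∈ E₀ | te.2 ∈ Set.Icc L U} ⊆ F ∧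
      IsClusterTemporalGraph Δ₁ Δ₂ (clampEdge L U '' F) ∧
      times (clampEdge L U '' F) ⊆ Set.Icc L U := by
  obtain ⟨P, rfl, -, hclique, hindep⟩ := hc
  let Q : Set (Set TimeEdge) := {K ∈ P | ∃ te ∈ K, te.2 ∈ Set.Icc L U}
  have hfin : ∀ K ∈ Q, K.Finite := fun K hK => hE₀.subset (Set.subset_sUnion_of_mem hK.1)
  have hindepQ : ∀ K₁ ∈ Q, ∀ K₂ ∈ Q, clampEdge L U '' K₁ ≠ clampEdge L U '' K₂ →
      Indep Δ₂ (clampEdge L U '' K₁) (clampEdge L U '' K₂) := fun K₁ hK₁ K₂ hK₂ hne =>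
    (hindep hK₁.1 hK₂.1 fun h => hne (h ▸ rfl)).image_clampEdge hΔ₂ (hfin K₁ hK₁) (hfin K₂ hK₂)
      hK₁.2 hK₂.2
  refine ⟨⋃₀ Q, Set.sUnion_mono (fun K hK => hK.1), ?_, ?_, ?_⟩
  · rintro te ⟨⟨K, hK, hte⟩, hw⟩
    exact ⟨K, ⟨hK, te, hte, hw⟩, hte⟩
  · refine ⟨(clampEdge L U '' ·) '' Q, Set.image_sUnion.symm, ?_, ?_, ?_⟩
    · rintro _ ⟨K₁, hK₁, rfl⟩ _ ⟨K₂, hK₂, rfl⟩ hne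
      exact (hindepQ K₁ hK₁ K₂ hK₂ hne).disjoint hΔ₂ ((hfin K₁ hK₁).image _)
        ((hfin K₂ hK₂).image _)
    · rintro _ ⟨K, hK, rfl⟩
      exact (hclique K hK.1).image_clampEdge L U hΔ₁ (hfin K hK)
    · rintro _ ⟨K₁, hK₁, rfl⟩ _ ⟨K₂, hK₂, rfl⟩ hne
      exact hindepQ K₁ hK₁ K₂ hK₂ hne
  · rintro _ ⟨_, ⟨te, ⟨K, ⟨-, w, -, hLw, hwU⟩, -⟩, rfl⟩, rfl⟩
    exact times_image_clampEdge_subset (hLw.trans hwU) {te} ⟨_, ⟨te, rfl, rfl⟩, rfl⟩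

theorem optimal_within_lifetime_general (Δ₁ Δ₂ T : ℕ) (h1 : 1 ≤ Δ₁) (h2 : Δ₁ < Δ₂)
    (E : Set TimeEdge) (hE : E.Finite) (hlife : times E ⊆ Set.Icc 1 T) :
    ∃ E' : Set TimeEdge, E'.Finite ∧ IsClusterTemporalGraph Δ₁ Δ₂ E' ∧
      times E' ⊆ Set.Icc 1 T ∧
      ∀ E'' : Set TimeEdge, E''.Finite → IsClusterTemporalGraph Δ₁ Δ₂ E'' →
        (symmDiff E E').ncard ≤ (symmDiff E E'').ncard := by
  obtain ⟨E₀, hE₀, hc₀, hmin⟩ := exists_isClusterTemporalGraph_ncard_symmDiff_le Δ₁ Δ₂ E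
  obtain ⟨F, hFE₀, hcover, hFc, hFtimes⟩ := hc₀.exists_clampEdge 1 T h1 (by omega) hE₀
  refine ⟨clampEdge 1 T '' F, (hE₀.subset hFE₀).image _, hFc, hFtimes, fun E'' hE'' hc'' => ?_⟩
  calc (symmDiff E (clampEdge 1 T '' F)).ncard ≤ (symmDiff E E₀).ncard :=
        Set.ncard_symmDiff_image_le _ hE hE₀ hFE₀
          (fun te hte => hcover ⟨hte.2, hlife (mem_times hte.1)⟩)
          (fun te hte => clampEdge_of_mem_Icc (hlife (mem_times hte)))
    _ ≤ (symmDiff E E'').ncard := hmin E'' hE'' hc''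

theorem optimal_within_lifetime (Δ₁ Δ₂ T : ℕ) (h1 : 1 ≤ Δ₁) (h2 : Δ₁ < Δ₂) (hT : 1 ≤ T)
    (E : Set TimeEdge) (hE : E.Finite) (hlife : times E ⊆ Set.Icc 1 T) :
    ∃ E' : Set TimeEdge, E'.Finite ∧ IsClusterTemporalGraph Δ₁ Δ₂ E' ∧
      times E' ⊆ Set.Icc 1 T ∧
      ∀ E'' : Set TimeEdge, E''.Finite → IsClusterTemporalGraph Δ₁ Δ₂ E'' →
        (symmDiff E E').ncard ≤ (symmDiff E E'').ncard :=
  optimal_within_lifetime_general Δ₁ Δ₂ T h1 h2 E hE hlife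
end

section
/- Let Δ₂ > 1 and let G be a temporal graph such that for every set S of at most 3 vertices, G[S] is a (1,Δ₂)-cluster temporal graph. Then G is a (1,Δ₂)-cluster temporal graph. -/
/-! Call two time-edges *linked* when they share a vertex and their times differ by less than
`Δ₂`. The at most three vertices of two linked time-edges induce a cluster temporal graph in
which the two cannot be separated, so they lie in one clique: every pair of their vertices is
joined at every time between them. The clusters of `G` are the components of the linking
relation. Along a chain of linked time-edges this local closure propagates, because for
`Δ₂ ≥ 2` an edge persists in time as long as one of its endpoints stays on some edge; hence
each component is a clique over its lifetime. Two components sharing a vertex `v` are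
far apart: their time-edges at `v` are pairwise unlinked, and the times of a component have
no gap of length `Δ₂`. -/

open Set Relation

def IsCliqueOn (E : Set TimeEdge) (W I : Set ℕ) : Prop :=
  ∀ x ∈ W, ∀ y ∈ W, x ≠ y → ∀ τ ∈ I, (s(x, y), τ) ∈ E

def IsStableOn (E : Set TimeEdge) (W I : Set ℕ) : Prop :=
  ∀ w ∈ W, ∀ x, x ≠ w → ∀ t₁ ∈ I, ∀ t₂ ∈ I, (s(x, w), t₁) ∈ E → (s(x, w), t₂) ∈ E

def Linked (d : ℕ) (E : Set TimeEdge) (a b : TimeEdge) : Prop :=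
  a ∈ E ∧ b ∈ E ∧ (∃ v, v ∈ a.1 ∧ v ∈ b.1) ∧ max a.2 b.2 - min a.2 b.2 < d

def LocallyClosed (d : ℕ) (E : Set TimeEdge) : Prop :=
  ∀ a b, Linked d E a b → IsCliqueOn E (verts {a, b}) (uIcc a.2 b.2)

def component (d : ℕ) (E : Set TimeEdge) (a : TimeEdge) : Set TimeEdge :=
  {b | b ∈ E ∧ ReflTransGen (Linked d E) a b}

lemma Set.OrdConnected.union_of_mem {α : Type*} [LinearOrder α] {I J : Set α} {p : α}
    (hI : I.OrdConnected) (hJ : J.OrdConnected) (hpI : p ∈ I) (hpJ : p ∈ J) :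
    (I ∪ J).OrdConnected :=
  ordConnected_of_uIcc_subset_left fun _ hy => hy.elim
    (fun hy => (hI.uIcc_subset hpI hy).trans subset_union_left)
    (fun hy => (hJ.uIcc_subset hpJ hy).trans subset_union_right)

lemma Set.OrdConnected.forall_of_succ_iff {P : ℕ → Prop} {I : Set ℕ} (hI : I.OrdConnected)
    {p : ℕ} (hp : p ∈ I) (hP : P p) (step : ∀ n ∈ I, n + 1 ∈ I → (P n ↔ P (n + 1))) :
    ∀ t ∈ I, P t := by
  intro t ht
  rcases le_total p t with hpt | htp
  · induction t, hpt using Nat.le_induction with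
    | base => exact hP
    | succ n hpn ih =>
      have hn : n ∈ I := hI.out hp ht ⟨hpn, by omega⟩
      exact (step n hn ht).1 (ih hn)
  · refine Nat.decreasingInduction' (fun n hnp htn ih => ?_) htp hP
    exact (step n (hI.out ht hp ⟨htn, by omega⟩) (hI.out ht hp ⟨by omega, hnp⟩)).2 ih

section

variable {d : ℕ} {E F : Set TimeEdge} {W W' I I' J : Set ℕ} {a b c : TimeEdge}

@[simp]
lemma mem_verts_pair {v : ℕ} : v ∈ verts {a, b} ↔ v ∈ a.1 ∨ v ∈ b.1 := by
  simp [verts]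

lemma verts_mono {S T : Set TimeEdge} (h : S ⊆ T) : verts S ⊆ verts T :=
  fun _ ⟨te, hte, hv⟩ => ⟨te, h hte, hv⟩

lemma mem_lifetime_s9 {K : Set TimeEdge} (hK : BddAbove (times K)) (ha : a ∈ K) :
    a.2 ∈ lifetime K :=
  ⟨Nat.sInf_le ⟨a, ha, rfl⟩, le_csSup hK ⟨a, ha, rfl⟩⟩

lemma IsCliqueOn.mono (h : IsCliqueOn E W I) (hEF : E ⊆ F) (hW : W' ⊆ W) (hI : I' ⊆ I) :
    IsCliqueOn F W' I' :=
  fun x hx y hy hxy τ hτ => hEF (h x (hW hx) y (hW hy) hxy τ (hI hτ))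

lemma IsStableOn.mono (h : IsStableOn E W I) (hW : W' ⊆ W) (hI : I' ⊆ I) :
    IsStableOn E W' I' :=
  fun w hw x hx t₁ h₁ t₂ h₂ => h w (hW hw) x hx t₁ (hI h₁) t₂ (hI h₂)

lemma IsStableOn.union {p : ℕ} (hI : IsStableOn E W I) (hJ : IsStableOn E W J)
    (hp : p ∈ I ∩ J) : IsStableOn E W (I ∪ J) := by
  intro w hw x hx t₁ h₁ t₂ h₂ h
  have hxp : (s(x, w), p) ∈ E := h₁.elim (fun h₁ => hI w hw x hx t₁ h₁ p hp.1 h)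
    (fun h₁ => hJ w hw x hx t₁ h₁ p hp.2 h)
  exact h₂.elim (fun h₂ => hI w hw x hx p hp.1 t₂ h₂ hxp) (fun h₂ => hJ w hw x hx p hp.2 t₂ h₂ hxp)

lemma IsTemporalClique.isCliqueOn {K : Set TimeEdge} (h : IsTemporalClique 1 K) :
    IsCliqueOn K (verts K) (lifetime K) := by
  intro x hx y hy hxy τ hτ
  simp only [lifetime, mem_Icc] at hτ
  obtain ⟨t, ht, hmem⟩ := h x hx y hy hxy τ ⟨hτ.1, le_max_of_le_right (by omega)⟩
  obtain rfl : t = τ := by simp only [mem_Icc] at ht; omega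
  exact hmem

lemma isTemporalClique_one_of_isCliqueOn {K : Set TimeEdge} (hK : BddAbove (times K))
    (h : IsCliqueOn K (verts K) (lifetime K)) : IsTemporalClique 1 K := by
  intro x hx y hy hxy τ hτ
  have ⟨e, he, _⟩ := hx
  have hlife := mem_lifetime_s9 hK he
  simp only [lifetime, mem_Icc] at hτ hlife
  exact ⟨τ, ⟨le_rfl, by omega⟩, h x hx y hy hxy τ ⟨hτ.1, by omega⟩⟩

lemma IsClusterTemporalGraph.locallyClosed (hF : IsClusterTemporalGraph 1 d F)
    (hfin : F.Finite) : LocallyClosed d F := by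
  obtain ⟨P, hunion, -, hclique, hindep⟩ := hF
  rintro a b ⟨ha, hb, ⟨v, hva, hvb⟩, hgap⟩
  have hsub : ∀ K ∈ P, K ⊆ F := fun K hK => hunion ▸ subset_sUnion_of_mem hK
  have hbdd : ∀ K ∈ P, BddAbove (times K) :=
    fun K hK => ((hfin.subset (hsub K hK)).image _).bddAbove
  rw [← hunion] at ha hb
  obtain ⟨K, hK, haK⟩ := ha
  obtain ⟨K', hK', hbK⟩ := hb
  -- `a` and `b` share a vertex and are less than `d` apart, so no clique can separate them
  obtain rfl : K = K' := by
    by_contra hne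
    rcases hindep hK hK' hne with hdisj | hfar
    · exact disjoint_left.mp hdisj ⟨a, haK, hva⟩ ⟨b, hbK, hvb⟩
    · have := hfar _ (mem_lifetime_s9 (hbdd K hK) haK) _ (mem_lifetime_s9 (hbdd K' hK') hbK)
      omega
  have hab : {a, b} ⊆ K := insert_subset haK (singleton_subset_iff.2 hbK)
  exact (hclique K hK).isCliqueOn.mono (hsub K hK) (verts_mono hab)
    (ordConnected_Icc.uIcc_subset (mem_lifetime_s9 (hbdd K hK) haK) (mem_lifetime_s9 (hbdd K hK) hbK))

lemma locallyClosed_of_induced (hE : E.Finite)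
    (h3 : ∀ A : Set ℕ, A.Finite → A.ncard ≤ 3 → IsClusterTemporalGraph 1 d (induced E A)) :
    LocallyClosed d E := by
  rintro a b ⟨ha, hb, ⟨v, hva, hvb⟩, hgap⟩
  obtain ⟨w₁, hw₁⟩ := Sym2.mem_iff_exists.mp hva
  obtain ⟨w₂, hw₂⟩ := Sym2.mem_iff_exists.mp hvb
  have hA : verts {a, b} ⊆ (({v, w₁, w₂} : Finset ℕ) : Set ℕ) := by
    intro u hu
    rw [mem_verts_pair, hw₁, hw₂, Sym2.mem_iff, Sym2.mem_iff] at hu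
    simp only [Finset.coe_insert, Finset.coe_singleton, mem_insert_iff, mem_singleton_iff]
    tauto
  have hcard : (verts {a, b}).ncard ≤ 3 := by
    refine (ncard_le_ncard hA (Finset.finite_toSet _)).trans ?_
    rw [ncard_coe_finset]
    exact Finset.card_le_three
  have hlinked : Linked d (induced E (verts {a, b})) a b :=
    ⟨⟨ha, fun u hu => by simp [hu]⟩, ⟨hb, fun u hu => by simp [hu]⟩, ⟨v, hva, hvb⟩, hgap⟩
  have hcluster := h3 _ ((Finset.finite_toSet _).subset hA) hcard
  exact (hcluster.locallyClosed (hE.subset (sep_subset _ _)) a b hlinked).mono (sep_subset _ _)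
    subset_rfl subset_rfl

lemma LocallyClosed.mem_of_mem_of_mem (hLC : LocallyClosed d E) (hd : 0 < d) {x y v t : ℕ}
    (hx : (s(x, v), t) ∈ E) (hy : (s(y, v), t) ∈ E) (hxy : x ≠ y) : (s(x, y), t) ∈ E :=
  hLC _ _ ⟨hx, hy, ⟨v, Sym2.mem_mk_right _ _, Sym2.mem_mk_right _ _⟩, by simpa⟩ x (by simp)
    y (by simp) hxy t (by simp)

lemma LocallyClosed.isStableOn_of_linked (hLC : LocallyClosed d E) (hbc : Linked d E b c)
    {v : ℕ} (hvb : v ∈ b.1) (hvc : v ∈ c.1) : IsStableOn E {v} (uIcc b.2 c.2) := by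
  rintro w rfl x hx t₁ h₁ t₂ h₂ h
  have hgap := hbc.2.2.2
  have hlink : ∀ f ∈ E, w ∈ f.1 → max t₁ f.2 - min t₁ f.2 < d →
      ∀ t ∈ uIcc t₁ f.2, (s(x, w), t) ∈ E := fun f hf hwf hgap' t ht =>
    hLC _ f ⟨h, hf, ⟨w, Sym2.mem_mk_right _ _, hwf⟩, hgap'⟩ x (by simp) w (by simp) hx t ht
  rw [mem_uIcc] at h₁
  rcases uIcc_subset_uIcc_union_uIcc (b := t₁) h₂ with h₂ | h₂
  · rw [uIcc_comm] at h₂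
    exact hlink b hbc.1 hvb (by omega) t₂ h₂
  · exact hlink c hbc.2.1 hvc (by omega) t₂ h₂

-- Since `d ≥ 2`, an edge `xw` at time `n` is linked to any edge at `w` at time `n ± 1`.
lemma LocallyClosed.isStableOn_of_active (hLC : LocallyClosed d E) (hd : 1 < d)
    (hI : I.OrdConnected) {w : ℕ} (hw : ∀ τ ∈ I, ∃ e : Sym2 ℕ, w ∈ e ∧ (e, τ) ∈ E) :
    IsStableOn E {w} I := by
  rintro w rfl x hx t₁ h₁ t₂ h₂ h
  refine hI.forall_of_succ_iff (P := fun n => (s(x, w), n) ∈ E) h₁ h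
    (fun n hn hn' => ⟨fun hxn => ?_, fun hxn => ?_⟩) t₂ h₂
  · obtain ⟨e, hwe, he⟩ := hw (n + 1) hn'
    exact hLC _ _ ⟨hxn, he, ⟨w, Sym2.mem_mk_right _ _, hwe⟩, by simp; omega⟩ x (by simp)
      w (by simp) hx (n + 1) right_mem_uIcc
  · obtain ⟨e, hwe, he⟩ := hw n hn
    exact hLC _ _ ⟨hxn, he, ⟨w, Sym2.mem_mk_right _ _, hwe⟩, by simp; omega⟩ x (by simp)
      w (by simp) hx n right_mem_uIcc

lemma LocallyClosed.extend (hLC : LocallyClosed d E) (hd : 1 < d) (hI : I.OrdConnected)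
    (hclq : IsCliqueOn E W I) (hst : IsStableOn E W I) (hbW : ∀ v ∈ b.1, v ∈ W)
    (hbI : b.2 ∈ I) (hbc : Linked d E b c) :
    IsCliqueOn E (W ∪ verts {b, c}) (I ∪ uIcc b.2 c.2) ∧
      IsStableOn E (W ∪ verts {b, c}) (I ∪ uIcc b.2 c.2) := by
  obtain ⟨v, hvb, hvc⟩ := hbc.2.2.1
  have hbJ : b.2 ∈ uIcc b.2 c.2 := left_mem_uIcc
  have hK : (I ∪ uIcc b.2 c.2).OrdConnected := hI.union_of_mem ordConnected_uIcc hbI hbJ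
  have hstv : IsStableOn E {v} (I ∪ uIcc b.2 c.2) :=
    (hst.mono (singleton_subset_iff.2 (hbW v hvb)) subset_rfl).union
      (hLC.isStableOn_of_linked hbc hvb hvc) ⟨hbI, hbJ⟩
  have hanchor : ∀ w ∈ W ∪ verts {b, c}, w ≠ v → ∀ τ ∈ I ∪ uIcc b.2 c.2, (s(w, v), τ) ∈ E := by
    intro w hw hwv τ hτ
    have hwb : (s(w, v), b.2) ∈ E := hw.elim (fun hw => hclq w hw v (hbW v hvb) hwv b.2 hbI)
      (fun hw => hLC b c hbc w hw v (by simp [hvb]) hwv b.2 hbJ)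
    exact hstv v rfl w hwv b.2 (subset_union_left hbI) τ hτ hwb
  have hst' : IsStableOn E (W ∪ verts {b, c}) (I ∪ uIcc b.2 c.2) := by
    intro w hw
    rcases eq_or_ne w v with rfl | hwv
    · exact hstv w rfl
    · exact hLC.isStableOn_of_active hd hK
        (fun τ hτ => ⟨s(w, v), Sym2.mem_mk_left _ _, hanchor w hw hwv τ hτ⟩) w rfl
  refine ⟨fun x hx y hy hxy τ hτ => ?_, hst'⟩
  rcases eq_or_ne x v with rfl | hxv
  · rw [Sym2.eq_swap]
    exact hanchor y hy hxy.symm τ hτ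
  rcases eq_or_ne y v with rfl | hyv
  · exact hanchor x hx hxv τ hτ
  have hxy₀ : (s(x, y), b.2) ∈ E := hLC.mem_of_mem_of_mem (by omega)
    (hanchor x hx hxv b.2 (subset_union_left hbI))
    (hanchor y hy hyv b.2 (subset_union_left hbI)) hxy
  exact hst' y hy x hxy b.2 (subset_union_left hbI) τ hτ hxy₀

lemma LocallyClosed.isCliqueOn_isStableOn_of_reflTransGen (hLC : LocallyClosed d E) (hd : 1 < d)
    (ha : a ∈ E) (hab : ReflTransGen (Linked d E) a b) :
    IsCliqueOn E (verts {a, b}) (uIcc a.2 b.2) ∧ IsStableOn E (verts {a, b}) (uIcc a.2 b.2) := by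
  induction hab with
  | refl =>
    refine ⟨hLC a a ⟨ha, ha, ⟨_, a.1.out_fst_mem, a.1.out_fst_mem⟩, by simp; omega⟩, ?_⟩
    intro w _ x _ t₁ h₁ t₂ h₂ h
    rw [uIcc_self, mem_singleton_iff] at h₁ h₂
    rwa [h₂, ← h₁]
  | @tail b c _ hbc ih =>
    obtain ⟨hclq, hst⟩ :=
      hLC.extend hd ordConnected_uIcc ih.1 ih.2 (fun v hv => by simp [hv]) right_mem_uIcc hbc
    have hW : verts {a, c} ⊆ verts {a, b} ∪ verts {b, c} := by
      intro v hv
      simp only [mem_verts_pair] at hv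
      simp only [mem_union, mem_verts_pair]
      tauto
    exact ⟨hclq.mono subset_rfl hW uIcc_subset_uIcc_union_uIcc,
      hst.mono hW uIcc_subset_uIcc_union_uIcc⟩

lemma Linked.symm (h : Linked d E a b) : Linked d E b a := by
  obtain ⟨ha, hb, ⟨v, hva, hvb⟩, hgap⟩ := h
  exact ⟨hb, ha, ⟨v, hvb, hva⟩, by omega⟩

instance : Std.Symm (Linked d E) := ⟨fun _ _ => Linked.symm⟩

lemma reflTransGen_linked_symm (h : ReflTransGen (Linked d E) a b) :
    ReflTransGen (Linked d E) b a :=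
  Std.Symm.symm _ _ h

lemma mem_component_self (ha : a ∈ E) : a ∈ component d E a := ⟨ha, .refl⟩

lemma component_subset : component d E a ⊆ E := fun _ h => h.1

lemma Linked.mem_component (hb : b ∈ component d E a) (hbc : Linked d E b c) :
    c ∈ component d E a :=
  ⟨hbc.2.1, hb.2.tail hbc⟩

lemma reflTransGen_of_mem_component (hb : b ∈ component d E a) (hc : c ∈ component d E a) :
    ReflTransGen (Linked d E) b c :=
  (reflTransGen_linked_symm hb.2).trans hc.2

lemma component_eq_of_mem (hb : b ∈ component d E a) : component d E b = component d E a :=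
  ext fun _ => ⟨fun hc => ⟨hc.1, hb.2.trans hc.2⟩,
    fun hc => ⟨hc.1, (reflTransGen_linked_symm hb.2).trans hc.2⟩⟩

lemma times_component_finite (hE : E.Finite) : (times (component d E a)).Finite :=
  (hE.subset component_subset).image _

lemma exists_mem_component_snd_eq_sInf_sSup (hE : E.Finite) (ha : a ∈ E) :
    (∃ e ∈ component d E a, e.2 = sInf (times (component d E a))) ∧
      ∃ e ∈ component d E a, e.2 = sSup (times (component d E a)) := by
  have hne : (times (component d E a)).Nonempty := ⟨a.2, a, mem_component_self ha, rfl⟩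
  exact ⟨Nat.sInf_mem hne, hne.csSup_mem (times_component_finite hE)⟩

lemma mem_component_of_forall_mem (hd : 1 < d) (hI : I.OrdConnected) {e : Sym2 ℕ} {p : ℕ}
    (hp : p ∈ I) (hep : (e, p) ∈ component d E a) (hE : ∀ t ∈ I, (e, t) ∈ E) :
    ∀ t ∈ I, (e, t) ∈ component d E a := by
  refine hI.forall_of_succ_iff hp hep fun n hn hn' => ?_
  have hlink : Linked d E (e, n) (e, n + 1) :=
    ⟨hE n hn, hE _ hn', ⟨e.out.1, e.out_fst_mem, e.out_fst_mem⟩, by simp; omega⟩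
  exact ⟨hlink.mem_component, hlink.symm.mem_component⟩

lemma LocallyClosed.isCliqueOn_component (hLC : LocallyClosed d E) (hd : 1 < d) (hE : E.Finite)
    (ha : a ∈ E) :
    IsCliqueOn (component d E a) (verts (component d E a)) (lifetime (component d E a)) := by
  set C := component d E a
  obtain ⟨⟨lo, hlo, hlo₂⟩, ⟨hi, hhi, hhi₂⟩⟩ := exists_mem_component_snd_eq_sInf_sSup (d := d) hE ha
  have hchain {e f : TimeEdge} (he : e ∈ C) (hf : f ∈ C) :
      IsCliqueOn E (verts {e, f}) (uIcc e.2 f.2) :=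
    (hLC.isCliqueOn_isStableOn_of_reflTransGen hd (component_subset he)
      (reflTransGen_of_mem_component he hf)).1
  rintro x ⟨ex, hex, hx⟩ y ⟨ey, hey, hy⟩ hxy
  have hgE : (s(x, y), ex.2) ∈ E :=
    hchain hex hey x (by simp [hx]) y (by simp [hy]) hxy ex.2 left_mem_uIcc
  have hg : (s(x, y), ex.2) ∈ C :=
    Linked.mem_component hex
      ⟨component_subset hex, hgE, ⟨x, hx, Sym2.mem_mk_left _ _⟩, by simp; omega⟩
  refine mem_component_of_forall_mem hd ordConnected_Icc
    (mem_lifetime_s9 (times_component_finite hE).bddAbove hex) hg fun t ht => ?_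
  rw [← hlo₂, ← hhi₂] at ht
  rcases uIcc_subset_uIcc_union_uIcc (b := ex.2) (Icc_subset_uIcc ht) with ht | ht
  · rw [uIcc_comm] at ht
    exact hchain hg hlo x (by simp) y (by simp) hxy t ht
  · exact hchain hg hhi x (by simp) y (by simp) hxy t ht

lemma exists_times_bracket_of_reflTransGen (hd : 0 < d) (ha : a ∈ E)
    (hab : ReflTransGen (Linked d E) a b) :
    ∀ s ∈ uIcc a.2 b.2, ∃ ρ₁ ∈ times (component d E a), ∃ ρ₂ ∈ times (component d E a),
      ρ₁ ≤ s ∧ s ≤ ρ₂ ∧ ρ₂ - ρ₁ < d := by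
  induction hab with
  | refl =>
    intro s hs
    rw [uIcc_self, mem_singleton_iff] at hs
    exact ⟨a.2, ⟨a, mem_component_self ha, rfl⟩, a.2, ⟨a, mem_component_self ha, rfl⟩,
      hs.ge, hs.le, by omega⟩
  | @tail b c hab hbc ih =>
    intro s hs
    rcases uIcc_subset_uIcc_union_uIcc hs with hs | hs
    · exact ih s hs
    have hb : b ∈ component d E a := ⟨hbc.1, hab⟩
    have hb₂ : b.2 ∈ times (component d E a) := ⟨b, hb, rfl⟩
    have hc₂ : c.2 ∈ times (component d E a) := ⟨c, hbc.mem_component hb, rfl⟩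
    have hgap := hbc.2.2.2
    rw [mem_uIcc] at hs
    rcases hs with hs | hs
    · exact ⟨b.2, hb₂, c.2, hc₂, hs.1, hs.2, by omega⟩
    · exact ⟨c.2, hc₂, b.2, hb₂, hs.1, hs.2, by omega⟩

lemma exists_times_bracket_of_mem_lifetime (hd : 0 < d) (hE : E.Finite) (ha : a ∈ E) {s : ℕ}
    (hs : s ∈ lifetime (component d E a)) :
    ∃ ρ₁ ∈ times (component d E a), ∃ ρ₂ ∈ times (component d E a),
      ρ₁ ≤ s ∧ s ≤ ρ₂ ∧ ρ₂ - ρ₁ < d := by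
  obtain ⟨⟨lo, hlo, hlo₂⟩, ⟨hi, hhi, hhi₂⟩⟩ := exists_mem_component_snd_eq_sInf_sSup hE ha
  rw [lifetime, ← hlo₂, ← hhi₂] at hs
  rcases uIcc_subset_uIcc_union_uIcc (b := a.2) (Icc_subset_uIcc hs) with hs | hs
  · rw [uIcc_comm] at hs
    exact exists_times_bracket_of_reflTransGen hd ha hlo.2 s hs
  · exact exists_times_bracket_of_reflTransGen hd ha hhi.2 s hs

lemma LocallyClosed.exists_mem_component_of_mem_verts (hLC : LocallyClosed d E) (hd : 1 < d)
    (hE : E.Finite) (ha : a ∈ E) {v ρ : ℕ} (hv : v ∈ verts (component d E a))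
    (hρ : ρ ∈ times (component d E a)) : ∃ g ∈ component d E a, v ∈ g.1 ∧ g.2 = ρ := by
  obtain ⟨e, he, rfl⟩ := hρ
  by_cases hve : v ∈ e.1
  · exact ⟨e, he, hve, rfl⟩
  refine ⟨(s(v, e.1.out.1), e.2), ?_, Sym2.mem_mk_left _ _, rfl⟩
  exact hLC.isCliqueOn_component hd hE ha v hv _ ⟨e, he, e.1.out_fst_mem⟩
    (fun h => hve (h ▸ e.1.out_fst_mem)) e.2 (mem_lifetime_s9 (times_component_finite hE).bddAbove he)

lemma LocallyClosed.indep_component (hLC : LocallyClosed d E) (hd : 1 < d) (hE : E.Finite)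
    (ha : a ∈ E) (hb : b ∈ E) (hne : component d E a ≠ component d E b) :
    Indep d (component d E a) (component d E b) := by
  rw [Indep, or_iff_not_imp_left, not_disjoint_iff]
  rintro ⟨v, hva, hvb⟩ s hs t ht
  have hfar : ∀ g ∈ component d E a, ∀ f ∈ component d E b, v ∈ g.1 → v ∈ f.1 →
      d ≤ max g.2 f.2 - min g.2 f.2 := by
    intro g hg f hf hvg hvf
    by_contra! hlt
    have hfa := Linked.mem_component hg ⟨hg.1, hf.1, ⟨v, hvg, hvf⟩, hlt⟩
    exact hne ((component_eq_of_mem hfa).symm.trans (component_eq_of_mem hf))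
  obtain ⟨ρ₁, hρ₁, ρ₂, hρ₂, hs₁, hs₂, hρ⟩ :=
    exists_times_bracket_of_mem_lifetime (by omega) hE ha hs
  obtain ⟨σ₁, hσ₁, σ₂, hσ₂, ht₁, ht₂, hσ⟩ :=
    exists_times_bracket_of_mem_lifetime (by omega) hE hb ht
  obtain ⟨g₁, hg₁, hvg₁, rfl⟩ := hLC.exists_mem_component_of_mem_verts hd hE ha hva hρ₁
  obtain ⟨g₂, hg₂, hvg₂, rfl⟩ := hLC.exists_mem_component_of_mem_verts hd hE ha hva hρ₂
  obtain ⟨f₁, hf₁, hvf₁, rfl⟩ := hLC.exists_mem_component_of_mem_verts hd hE hb hvb hσ₁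
  obtain ⟨f₂, hf₂, hvf₂, rfl⟩ := hLC.exists_mem_component_of_mem_verts hd hE hb hvb hσ₂
  have := hfar g₁ hg₁ f₁ hf₁ hvg₁ hvf₁
  have := hfar g₁ hg₁ f₂ hf₂ hvg₁ hvf₂
  have := hfar g₂ hg₂ f₁ hf₁ hvg₂ hvf₁
  have := hfar g₂ hg₂ f₂ hf₂ hvg₂ hvf₂
  omega

end

theorem three_vertex_condition_suffices (Δ₂ : ℕ) (h2 : 1 < Δ₂)
    (E : Set TimeEdge) (hE : E.Finite)
    (h3 : ∀ A : Set ℕ, A.Finite → A.ncard ≤ 3 →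
      IsClusterTemporalGraph 1 Δ₂ (induced E A)) :
    IsClusterTemporalGraph 1 Δ₂ E := by
  have hLC : LocallyClosed Δ₂ E := locallyClosed_of_induced hE h3
  refine ⟨{C | ∃ a ∈ E, C = component Δ₂ E a}, ?_, ?_, ?_, ?_⟩
  · ext e
    refine ⟨?_, fun he => ⟨component Δ₂ E e, ⟨e, he, rfl⟩, mem_component_self he⟩⟩
    rintro ⟨_, ⟨a, -, rfl⟩, he⟩
    exact he.1
  · rintro _ ⟨a, -, rfl⟩ _ ⟨b, -, rfl⟩ hne
    refine disjoint_left.2 fun e hea heb => hne ?_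
    rw [← component_eq_of_mem hea, component_eq_of_mem heb]
  · rintro _ ⟨a, ha, rfl⟩
    exact isTemporalClique_one_of_isCliqueOn (times_component_finite hE).bddAbove
      (hLC.isCliqueOn_component h2 hE ha)
  · rintro _ ⟨a, ha, rfl⟩ _ ⟨b, hb, rfl⟩ hne
    exact hLC.indep_component h2 hE ha hb hne
end
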